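/- Let D be a division ring with derivation δ. Any ring automorphism H of D[t;δ] that restricts to an automorphism of D and fixes a polynomial f ∈ D[t;δ] of degree m ≥ 1 induces an automorphism of the nonassociative algebra S_f = D[t;δ]/D[t;δ]f (with multiplication g∘h = gh mod_r f). More generally, any such automorphism H induces an isomorphism S_f ≅ S_{H(f)}. -/

import Mathlib

/-- A differential (Ore) polynomial ring `D[t;δ]`: a ring containing `D` via the
ring embedding `ι`, with an element `t` satisfying `t·a = a·t + δ(a)`, and which is
freely spanned as a left `D`-module by the powers of `t` (via `rep`). -/
structure DiffPolyRing (D : Type*) [Ring D] (δ : D → D) where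
  carrier : Type*
  [ring : Ring carrier]
  ι : D →+* carrier
  t : carrier
  tcomm : ∀ a : D, t * ι a = ι a * t + ι (δ a)
  rep : carrier ≃+ (ℕ →₀ D)
  rep_symm_apply : ∀ c : ℕ →₀ D, rep.symm c = c.sum fun i a => ι a * t ^ i

attribute [instance] DiffPolyRing.ring

namespace DiffPolyRing

variable {D : Type*} [Ring D] {δ : D → D}

/-- The degree of a differential polynomial, with `deg 0 = ⊥`. -/
noncomputable def deg (P : DiffPolyRing D δ) (p : P.carrier) : WithBot ℕ :=
  (P.rep p).support.max

end DiffPolyRing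

/-!
An automorphism `H` that maps `D` into `D` preserves degrees. With `d = deg H(t)`, the leading
term of `H(p)` is `H(a) H(t)^n`, so `deg H(p) = d · deg p` as soon as `d ≥ 1`; the upper bound
`deg H(p) ≤ d · deg p` applied to `p = H⁻¹(t)` gives `d ≥ 1`, and then `t = H(H⁻¹(t))` forces
`d = 1`. Since `D` has no zero divisors, remainders of right division by `f` are unique. Hence
`g ↦ H(g) mod_r H(f)` is `H` itself on polynomials of degree `< deg f`, and it carries
`gh mod_r f` to `H(g)H(h) mod_r H(f)` because `H(gh) - H(gh mod_r f)` is a left multiple of `H(f)`.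
-/

namespace DiffPolyRing

section Ring

variable {D : Type*} [Ring D] {δ : D → D} (P : DiffPolyRing D δ)

lemma rep_ι_mul_t_pow (a : D) (i : ℕ) : P.rep (P.ι a * P.t ^ i) = Finsupp.single i a := by
  rw [← P.rep.apply_symm_apply (Finsupp.single i a), P.rep_symm_apply,
    Finsupp.sum_single_index (by simp)]

lemma sum_rep (p : P.carrier) : ((P.rep p).sum fun i a => P.ι a * P.t ^ i) = p := by
  rw [← P.rep_symm_apply, AddEquiv.symm_apply_apply]

lemma rep_ne_zero_of_deg_eq {p : P.carrier} {n : ℕ} (h : P.deg p = n) : P.rep p n ≠ 0 :=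
  Finsupp.mem_support_iff.1 (Finset.mem_of_max h)

lemma deg_lt_of_rep_eq_zero {p : P.carrier} {n : ℕ} (h : P.deg p ≤ n) (hn : P.rep p n = 0) :
    P.deg p < n :=
  h.lt_of_ne fun e => P.rep_ne_zero_of_deg_eq e hn

@[simp]
lemma deg_eq_bot_iff {p : P.carrier} : P.deg p = ⊥ ↔ p = 0 := by
  rw [deg, Finset.max_eq_bot, Finsupp.support_eq_empty, AddEquivClass.map_eq_zero_iff]

@[simp]
lemma deg_zero : P.deg 0 = ⊥ := P.deg_eq_bot_iff.2 rfl

lemma exists_deg_eq {p : P.carrier} (hp : p ≠ 0) : ∃ n : ℕ, P.deg p = n :=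
  WithBot.ne_bot_iff_exists.1 (mt P.deg_eq_bot_iff.1 hp) |>.imp fun _ h => h.symm

lemma zero_le_deg {p : P.carrier} (hp : p ≠ 0) : 0 ≤ P.deg p := by
  obtain ⟨n, hn⟩ := P.exists_deg_eq hp
  rw [hn]
  exact_mod_cast n.zero_le

lemma deg_add_le (p q : P.carrier) : P.deg (p + q) ≤ max (P.deg p) (P.deg q) := by
  rw [deg, deg, deg, map_add, ← Finset.max_union]
  exact Finset.max_mono Finsupp.support_add

@[simp]
lemma deg_neg (p : P.carrier) : P.deg (-p) = P.deg p := by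
  rw [deg, deg, map_neg, Finsupp.support_neg]

lemma deg_sub_le (p q : P.carrier) : P.deg (p - q) ≤ max (P.deg p) (P.deg q) := by
  simpa [sub_eq_add_neg] using P.deg_add_le p (-q)

lemma deg_add_lt {p q : P.carrier} {b : WithBot ℕ} (hp : P.deg p < b) (hq : P.deg q < b) :
    P.deg (p + q) < b :=
  (P.deg_add_le p q).trans_lt (max_lt hp hq)

lemma deg_add_eq_left {p q : P.carrier} (h : P.deg q < P.deg p) : P.deg (p + q) = P.deg p := by
  refine (P.deg_add_le p q).trans (max_le le_rfl h.le) |>.antisymm ?_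
  have := P.deg_sub_le (p + q) q
  rw [add_sub_cancel_right] at this
  exact (le_max_iff.1 this).resolve_right h.not_ge

lemma deg_sum_le {ι : Type*} (s : Finset ι) (g : ι → P.carrier) {b : WithBot ℕ}
    (h : ∀ i ∈ s, P.deg (g i) ≤ b) : P.deg (∑ i ∈ s, g i) ≤ b := by
  induction s using Finset.cons_induction with
  | empty => simp
  | cons x s hx ih =>
    rw [Finset.sum_cons]
    exact (P.deg_add_le _ _).trans <| max_le (h x (Finset.mem_cons_self x s))
      (ih fun i hi => h i (Finset.mem_cons_of_mem hi))

lemma deg_ι_mul_t_pow_le (a : D) (i : ℕ) : P.deg (P.ι a * P.t ^ i) ≤ i := by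
  rw [deg, rep_ι_mul_t_pow]
  exact Finset.max_le fun j hj => by
    rw [Finset.mem_singleton.1 (Finsupp.support_single_subset hj), Nat.cast_withBot]

lemma deg_ι_mul_t_pow {a : D} (ha : a ≠ 0) (i : ℕ) : P.deg (P.ι a * P.t ^ i) = i := by
  rw [deg, rep_ι_mul_t_pow, Finsupp.support_single _ ha, Finset.max_singleton, Nat.cast_withBot]

lemma deg_ι_le (a : D) : P.deg (P.ι a) ≤ 0 := by
  simpa using P.deg_ι_mul_t_pow_le a 0

lemma deg_ι {a : D} (ha : a ≠ 0) : P.deg (P.ι a) = 0 := by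
  simpa using P.deg_ι_mul_t_pow ha 0

lemma deg_one_le : P.deg 1 ≤ 0 := by
  simpa using P.deg_ι_le 1

lemma deg_t_pow_le (i : ℕ) : P.deg (P.t ^ i) ≤ i := by
  simpa using P.deg_ι_mul_t_pow_le 1 i

lemma deg_ι_mul_le (a : D) (p : P.carrier) : P.deg (P.ι a * p) ≤ P.deg p := by
  conv_lhs => rw [← P.sum_rep p, Finsupp.sum, Finset.mul_sum]
  refine P.deg_sum_le _ _ fun i hi => ?_
  rw [← mul_assoc, ← map_mul]
  exact (P.deg_ι_mul_t_pow_le _ i).trans (Finset.le_max hi)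

lemma deg_t_mul_le (p : P.carrier) : P.deg (P.t * p) ≤ P.deg p + 1 := by
  conv_lhs => rw [← P.sum_rep p, Finsupp.sum, Finset.mul_sum]
  refine P.deg_sum_le _ _ fun i hi => ?_
  have hi : (i : WithBot ℕ) ≤ P.deg p := Finset.le_max hi
  rw [← mul_assoc, P.tcomm, add_mul, mul_assoc, ← pow_succ']
  refine (P.deg_add_le _ _).trans (max_le ?_ ?_)
  · exact (P.deg_ι_mul_t_pow_le _ _).trans (by push_cast; gcongr)
  · exact (P.deg_ι_mul_t_pow_le _ _).trans (hi.trans (le_add_of_nonneg_right zero_le_one))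

lemma deg_t_pow_mul_le (p : P.carrier) (i : ℕ) : P.deg (P.t ^ i * p) ≤ P.deg p + i := by
  induction i with
  | zero => simp
  | succ i ih =>
    rw [pow_succ', mul_assoc]
    exact (P.deg_t_mul_le _).trans (by push_cast; rw [← add_assoc]; gcongr)

lemma deg_mul_le (p q : P.carrier) : P.deg (p * q) ≤ P.deg p + P.deg q := by
  conv_lhs => rw [← P.sum_rep p, Finsupp.sum, Finset.sum_mul]
  refine P.deg_sum_le _ _ fun i hi => ?_
  rw [mul_assoc, add_comm]
  exact (P.deg_ι_mul_le _ _).trans <|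
    (P.deg_t_pow_mul_le q i).trans (by gcongr; exact Finset.le_max hi)

lemma deg_pow_le {x : P.carrier} {d : ℕ} (hx : P.deg x ≤ d) (i : ℕ) :
    P.deg (x ^ i) ≤ (d * i : ℕ) := by
  induction i with
  | zero => simpa using P.deg_one_le
  | succ i ih =>
    rw [pow_succ]
    exact (P.deg_mul_le _ _).trans (by rw [mul_add_one]; push_cast at ih ⊢; gcongr)

lemma t_pow_mul_ι (a : D) (i : ℕ) :
    ∃ r, P.deg r < i ∧ P.t ^ i * P.ι a = P.ι a * P.t ^ i + r := by
  induction i with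
  | zero => exact ⟨0, by simp, by simp⟩
  | succ i ih =>
    obtain ⟨r, hr, he⟩ := ih
    refine ⟨P.ι (δ a) * P.t ^ i + P.t * r, ?_, ?_⟩
    · refine P.deg_add_lt ?_ ?_
      · exact (P.deg_ι_mul_t_pow_le _ _).trans_lt (by exact_mod_cast i.lt_succ_self)
      · refine (P.deg_t_mul_le r).trans_lt ?_
        push_cast
        exact WithBot.add_lt_add_right WithBot.one_ne_bot hr
    · rw [pow_succ', mul_assoc, he, mul_add, ← mul_assoc, P.tcomm, add_mul, mul_assoc,
        ← pow_succ', add_assoc]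

lemma deg_sub_leading_lt {p : P.carrier} {n : ℕ} (h : P.deg p = n) :
    P.deg (p - P.ι (P.rep p n) * P.t ^ n) < n := by
  refine P.deg_lt_of_rep_eq_zero ?_ ?_
  · exact (P.deg_sub_le _ _).trans (max_le h.le (P.deg_ι_mul_t_pow_le _ _))
  · simp [rep_ι_mul_t_pow]

lemma deg_map_le {F : Type*} [FunLike F P.carrier P.carrier]
    [RingHomClass F P.carrier P.carrier] (φ : F) (hφ : ∀ a, ∃ b, φ (P.ι a) = P.ι b) {d : ℕ}
    (hd : P.deg (φ P.t) ≤ d) {p : P.carrier} {n : ℕ} (hp : P.deg p ≤ n) :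
    P.deg (φ p) ≤ (d * n : ℕ) := by
  conv_lhs => rw [← P.sum_rep p, Finsupp.sum, map_sum]
  refine P.deg_sum_le _ _ fun i hi => ?_
  obtain ⟨b, hb⟩ := hφ (P.rep p i)
  have hi : i ≤ n := WithBot.coe_le_coe.1 ((Finset.le_max hi).trans hp)
  rw [map_mul, map_pow, hb]
  calc P.deg (P.ι b * φ P.t ^ i) ≤ 0 + (d * i : ℕ) :=
        (P.deg_mul_le _ _).trans (add_le_add (P.deg_ι_le b) (P.deg_pow_le hd i))
    _ ≤ (d * n : ℕ) := by rw [zero_add]; exact_mod_cast Nat.mul_le_mul_left d hi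

def IsRightRemainder (f g r : P.carrier) : Prop :=
  P.deg r < P.deg f ∧ ∃ q, g = q * f + r

variable {P}

lemma isRightRemainder_self {f g : P.carrier} (hg : P.deg g < P.deg f) :
    P.IsRightRemainder f g g :=
  ⟨hg, 0, by rw [zero_mul, zero_add]⟩

lemma IsRightRemainder.add {f g g' r r' : P.carrier} (h : P.IsRightRemainder f g r)
    (h' : P.IsRightRemainder f g' r') : P.IsRightRemainder f (g + g') (r + r') := by
  obtain ⟨hr, q, rfl⟩ := h
  obtain ⟨hr', q', rfl⟩ := h'
  exact ⟨P.deg_add_lt hr hr', q + q', by noncomm_ring⟩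

lemma IsRightRemainder.mul_add {f g r : P.carrier} (h : P.IsRightRemainder f g r)
    (q : P.carrier) : P.IsRightRemainder f (q * f + g) r := by
  obtain ⟨hr, q', rfl⟩ := h
  exact ⟨hr, q + q', by noncomm_ring⟩

end Ring

section Domain

variable {D : Type*} [Ring D] [IsDomain D] {δ : D → D} (P : DiffPolyRing D δ)

lemma deg_one : P.deg 1 = 0 := by
  simpa using P.deg_ι (one_ne_zero (α := D))

lemma deg_t : P.deg P.t = 1 := by
  simpa using P.deg_ι_mul_t_pow (one_ne_zero (α := D)) 1

lemma t_ne_zero : P.t ≠ 0 := fun h => by simpa [h] using P.deg_t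

lemma deg_mul (p q : P.carrier) : P.deg (p * q) = P.deg p + P.deg q := by
  rcases eq_or_ne p 0 with rfl | hp
  · simp
  rcases eq_or_ne q 0 with rfl | hq
  · simp
  obtain ⟨n, hn⟩ := P.exists_deg_eq hp
  obtain ⟨m, hm⟩ := P.exists_deg_eq hq
  set a := P.rep p n
  set b := P.rep q m
  have hab : a * b ≠ 0 := mul_ne_zero (P.rep_ne_zero_of_deg_eq hn) (P.rep_ne_zero_of_deg_eq hm)
  obtain ⟨r, hr, hcomm⟩ := P.t_pow_mul_ι b n
  have hp' := P.deg_sub_leading_lt hn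
  have hq' := P.deg_sub_leading_lt hm
  set p' := p - P.ι a * P.t ^ n
  set q' := q - P.ι b * P.t ^ m
  have hexp : p * q = P.ι (a * b) * P.t ^ (n + m) +
      (P.ι a * (r * P.t ^ m) + P.ι a * (P.t ^ n * q') + p' * q) := by
    have : p * q = P.ι a * (P.t ^ n * P.ι b) * P.t ^ m + P.ι a * (P.t ^ n * q') + p' * q := by
      simp only [p', q']
      noncomm_ring
    rw [this, hcomm, map_mul, pow_add]
    noncomm_ring
  have hlow : P.deg (P.ι a * (r * P.t ^ m) + P.ι a * (P.t ^ n * q') + p' * q) < n + m := by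
    refine P.deg_add_lt (P.deg_add_lt ?_ ?_) ?_
    · refine (P.deg_ι_mul_le _ _).trans_lt ((P.deg_mul_le _ _).trans_lt ?_)
      calc P.deg r + P.deg (P.t ^ m) ≤ P.deg r + m := by gcongr; exact P.deg_t_pow_le m
        _ < n + m := WithBot.add_lt_add_right (WithBot.natCast_ne_bot m) hr
    · refine (P.deg_ι_mul_le _ _).trans_lt ((P.deg_t_pow_mul_le _ _).trans_lt ?_)
      rw [add_comm (n : WithBot ℕ)]
      exact WithBot.add_lt_add_right (WithBot.natCast_ne_bot n) hq'
    · refine (P.deg_mul_le _ _).trans_lt ?_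
      rw [hm]
      exact WithBot.add_lt_add_right (WithBot.natCast_ne_bot m) hp'
  rw [← Nat.cast_add, ← P.deg_ι_mul_t_pow hab] at hlow
  rw [hexp, P.deg_add_eq_left hlow, P.deg_ι_mul_t_pow hab, hn, hm, Nat.cast_add]

lemma deg_pow {x : P.carrier} {d : ℕ} (hx : P.deg x = d) (i : ℕ) :
    P.deg (x ^ i) = (d * i : ℕ) := by
  induction i with
  | zero => simpa using P.deg_one
  | succ i ih => rw [pow_succ, P.deg_mul, ih, hx, mul_add_one, Nat.cast_add]

lemma deg_map_eq {F : Type*} [FunLike F P.carrier P.carrier]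
    [RingHomClass F P.carrier P.carrier] {φ : F} (hinj : Function.Injective φ)
    (hφ : ∀ a, ∃ b, φ (P.ι a) = P.ι b) {d : ℕ} (hd : P.deg (φ P.t) = d) (hd0 : 0 < d)
    {p : P.carrier} {n : ℕ} (hp : P.deg p = n) : P.deg (φ p) = (d * n : ℕ) := by
  set a := P.rep p n
  have ha : a ≠ 0 := P.rep_ne_zero_of_deg_eq hp
  obtain ⟨b, hb⟩ := hφ a
  have hb0 : b ≠ 0 := by
    rintro rfl
    rw [map_zero, map_eq_zero_iff φ hinj] at hb
    simpa [hb] using P.deg_ι ha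
  have hlead : P.deg (φ (P.ι a * P.t ^ n)) = (d * n : ℕ) := by
    rw [map_mul, map_pow, hb, P.deg_mul, P.deg_ι hb0, P.deg_pow hd, zero_add]
  have hlow : P.deg (φ (p - P.ι a * P.t ^ n)) < (d * n : ℕ) := by
    have hp' := P.deg_sub_leading_lt hp
    rcases eq_or_ne (p - P.ι a * P.t ^ n) 0 with h0 | h0
    · rw [h0, map_zero, deg_zero]
      exact WithBot.bot_lt_coe _
    obtain ⟨k, hk⟩ := P.exists_deg_eq h0
    have hkn : k < n := by exact_mod_cast hk ▸ hp'
    exact (P.deg_map_le φ hφ hd.le hk.le).trans_lt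
      (by exact_mod_cast Nat.mul_lt_mul_of_pos_left hkn hd0)
  rw [← sub_add_cancel p (P.ι a * P.t ^ n), map_add, add_comm, P.deg_add_eq_left (hlead ▸ hlow),
    hlead]

lemma deg_map_ringEquiv (H : P.carrier ≃+* P.carrier) (hH : ∀ a, ∃ b, H (P.ι a) = P.ι b)
    (p : P.carrier) : P.deg (H p) = P.deg p := by
  obtain ⟨d, hd⟩ := P.exists_deg_eq ((map_ne_zero_iff H H.injective).2 P.t_ne_zero)
  obtain ⟨k, hk⟩ := P.exists_deg_eq ((map_ne_zero_iff H.symm H.symm.injective).2 P.t_ne_zero)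
  have hdk : 1 ≤ d * k := by
    have := P.deg_map_le H hH hd.le hk.le
    rw [H.apply_symm_apply, P.deg_t] at this
    exact_mod_cast this
  have hd0 : 0 < d := Nat.pos_of_mul_pos_right hdk
  have hd1 : d = 1 := by
    have := P.deg_map_eq H.injective hH hd hd0 hk
    rw [H.apply_symm_apply, P.deg_t] at this
    exact Nat.eq_one_of_mul_eq_one_right (by exact_mod_cast this.symm)
  rcases eq_or_ne p 0 with rfl | hp
  · simp
  obtain ⟨n, hn⟩ := P.exists_deg_eq hp
  rw [P.deg_map_eq H.injective hH hd hd0 hn, hd1, one_mul, hn]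

variable {P}

lemma IsRightRemainder.unique {f g r₁ r₂ : P.carrier} (h₁ : P.IsRightRemainder f g r₁)
    (h₂ : P.IsRightRemainder f g r₂) : r₁ = r₂ := by
  obtain ⟨hr₁, q₁, rfl⟩ := h₁
  obtain ⟨hr₂, q₂, he⟩ := h₂
  have hsub : (q₂ - q₁) * f = r₁ - r₂ := by
    rw [sub_mul, sub_eq_sub_iff_add_eq_add, ← he, add_comm]
  by_contra hne
  have hq : q₂ - q₁ ≠ 0 := by
    rintro h
    rw [h, zero_mul, eq_comm, sub_eq_zero] at hsub
    exact hne hsub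
  have hf : P.deg f ≤ P.deg (r₁ - r₂) := by
    rw [← hsub, P.deg_mul]
    exact le_add_of_nonneg_left (P.zero_le_deg hq)
  exact hf.not_gt ((P.deg_sub_le _ _).trans_lt (max_lt hr₁ hr₂))

end Domain

end DiffPolyRing

theorem automorphism_induces_iso_Sf_general
    (D : Type*) [DivisionRing D] (δ : D → D)
    (P : DiffPolyRing D δ) (H : P.carrier ≃+* P.carrier)
    (hres : ∀ a : D, ∃ b : D, H (P.ι a) = P.ι b)
    (f : P.carrier) (hm : (1 : WithBot ℕ) ≤ P.deg f)
    (modf : P.carrier → P.carrier)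
    (hmodf : ∀ g : P.carrier, P.deg (modf g) < P.deg f ∧ ∃ q, g = q * f + modf g)
    (modf' : P.carrier → P.carrier)
    (hmodf' : ∀ g : P.carrier,
      P.deg (modf' g) < P.deg (H f) ∧ ∃ q, g = q * H f + modf' g) :
    (Set.BijOn (fun g => modf' (H g))
        {g : P.carrier | P.deg g < P.deg f} {g : P.carrier | P.deg g < P.deg (H f)}) ∧
    (∀ g h : P.carrier, modf' (H (g + h)) = modf' (H g) + modf' (H h)) ∧
    (modf' (H 1) = 1) ∧
    (∀ g h : P.carrier, P.deg g < P.deg f → P.deg h < P.deg f →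
      modf' (H (modf (g * h))) = modf' (modf' (H g) * modf' (H h))) ∧
    (H f = f → ∀ g : P.carrier, modf' g = modf g) := by
  have hdeg := P.deg_map_ringEquiv H hres
  have hrem : ∀ g, P.IsRightRemainder f g (modf g) := hmodf
  have hrem' : ∀ g, P.IsRightRemainder (H f) g (modf' g) := hmodf'
  have hlow : ∀ g, P.deg g < P.deg f → modf' (H g) = H g := fun g hg =>
    (hrem' (H g)).unique (DiffPolyRing.isRightRemainder_self (by rwa [hdeg, hdeg]))
  refine ⟨?_, fun g h => ?_, ?_, fun g h hg hh => ?_, fun hfix g => ?_⟩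
  · exact (H.toEquiv.bijOn fun g => by simp [hdeg]).congr fun g hg => (hlow g hg).symm
  · rw [map_add]
    exact (hrem' _).unique ((hrem' _).add (hrem' _))
  · rw [map_one]
    refine (hrem' 1).unique (DiffPolyRing.isRightRemainder_self ?_)
    rw [P.deg_one, hdeg]
    exact zero_lt_one.trans_le hm
  · obtain ⟨q, hq⟩ := (hrem (g * h)).2
    have hmul : H g * H h = H q * H f + H (modf (g * h)) := by
      rw [← map_mul, ← map_mul, ← map_add, ← hq]
    rw [hlow g hg, hlow h hh, hmul]
    exact ((hrem' _).mul_add (H q)).unique (hrem' _)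
  · rw [hfix] at hrem'
    exact (hrem' g).unique (hrem g)

/-- a ring automorphism `H` of `D[t;δ]` restricting to an automorphism
of `D` induces an isomorphism `S_f ≅ S_{H(f)}` via `g ↦ H(g) mod_r H(f)`; if moreover
`H(f) = f` it induces an automorphism of `S_f`. -/
theorem automorphism_induces_iso_Sf
    (D : Type*) [DivisionRing D] (δ : D → D)
    (hadd : ∀ a b : D, δ (a + b) = δ a + δ b)
    (hmul : ∀ a b : D, δ (a * b) = a * δ b + δ a * b)
    (P : DiffPolyRing D δ) (H : P.carrier ≃+* P.carrier)
    (hres : ∀ a : D, ∃ b : D, H (P.ι a) = P.ι b)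
    (hres' : ∀ b : D, ∃ a : D, H (P.ι a) = P.ι b)
    (f : P.carrier) (hm : (1 : WithBot ℕ) ≤ P.deg f)
    (modf : P.carrier → P.carrier)
    (hmodf : ∀ g : P.carrier, P.deg (modf g) < P.deg f ∧ ∃ q, g = q * f + modf g)
    (modf' : P.carrier → P.carrier)
    (hmodf' : ∀ g : P.carrier,
      P.deg (modf' g) < P.deg (H f) ∧ ∃ q, g = q * H f + modf' g) :
    (Set.BijOn (fun g => modf' (H g))
        {g : P.carrier | P.deg g < P.deg f} {g : P.carrier | P.deg g < P.deg (H f)}) ∧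
    (∀ g h : P.carrier, modf' (H (g + h)) = modf' (H g) + modf' (H h)) ∧
    (modf' (H 1) = 1) ∧
    (∀ g h : P.carrier, P.deg g < P.deg f → P.deg h < P.deg f →
      modf' (H (modf (g * h))) = modf' (modf' (H g) * modf' (H h))) ∧
    (H f = f → ∀ g : P.carrier, modf' g = modf g) :=
  automorphism_induces_iso_Sf_general D δ P H hres f hm modf hmodf modf' hmodf'
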